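/- Bisimilar microCCS processes have equal contribution at every prefix: if P ∼ Q then ν_η(P) = ν_η(Q) for every prefix η, where ν_η(P) is the total size of the top-level parallel components of P that start with prefix η. -/
import Mathlib


/-- CCS visible actions: a name `a` or a coname `ā`. -/
inductive Act where
  | inp : ℕ → Act
  | out : ℕ → Act
deriving DecidableEq

/-- The coaction. -/
def Act.co : Act → Act
  | .inp a => .out a
  | .out a => .inp a

/-- MicroCCS processes: nil, prefix, parallel composition. -/
inductive Proc where
  | nil : Proc
  | pre : Act → Proc → Proc
  | par : Proc → Proc → Proc
deriving DecidableEq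

/-- Transition labels: a visible action or τ. -/
inductive Lab where
  | act : Act → Lab
  | tau : Lab
deriving DecidableEq

/-- The standard CCS labelled transition system on microCCS. -/
inductive Step : Proc → Lab → Proc → Prop where
  | pre (η : Act) (P : Proc) : Step (.pre η P) (.act η) P
  | syn {P P' Q Q' : Proc} {η : Act} :
      Step P (.act η) P' → Step Q (.act η.co) Q' →
      Step (.par P Q) .tau (.par P' Q')
  | parL {P P' : Proc} {μ : Lab} (Q : Proc) :
      Step P μ P' → Step (.par P Q) μ (.par P' Q)
  | parR {Q Q' : Proc} {μ : Lab} (P : Proc) :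
      Step Q μ Q' → Step (.par P Q) μ (.par P Q')

/-- A (symmetric) bisimulation. -/
def IsBisim (R : Proc → Proc → Prop) : Prop :=
  (∀ P Q, R P Q → R Q P) ∧
  ∀ P Q μ P', R P Q → Step P μ P' → ∃ Q', Step Q μ Q' ∧ R P' Q'

/-- Strong bisimilarity: the union of all bisimulations. -/
def Bisim (P Q : Proc) : Prop := ∃ R, IsBisim R ∧ R P Q

/-- The size of a process: its number of prefixes. -/
def Proc.size : Proc → ℕ
  | .nil => 0
  | .pre _ P => 1 + P.size
  | .par P Q => P.size + Q.size

/-- Structural congruence: abelian monoid laws for parallel composition. -/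
inductive SC : Proc → Proc → Prop where
  | refl (P) : SC P P
  | symm : SC P Q → SC Q P
  | trans : SC P Q → SC Q R → SC P R
  | comm (P Q) : SC (.par P Q) (.par Q P)
  | assoc (P Q R) : SC (.par P (.par Q R)) (.par (.par P Q) R)
  | unit (P) : SC (.par P .nil) P
  | pre (η) : SC P Q → SC (.pre η P) (.pre η Q)
  | par : SC P P' → SC Q Q' → SC (.par P Q) (.par P' Q')

/-- `pow P k` is the k-fold parallel composition of `P`. -/
def pow (P : Proc) : ℕ → Proc
  | 0 => .nil
  | n+1 => .par P (pow P n)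

/-- One step of rewriting with the distribution law
    `η.(P ‖ (η.P)^k) ⇝ (η.P)^{k+1}` (k ≥ 1), modulo structural
    congruence, in any context. -/
inductive RW : Proc → Proc → Prop where
  | head {η : Act} {P : Proc} {k : ℕ} (hk : 1 ≤ k) :
      RW (.pre η (.par P (pow (.pre η P) k))) (pow (.pre η P) (k+1))
  | pre (η) : RW P P' → RW (.pre η P) (.pre η P')
  | parL (Q) : RW P P' → RW (.par P Q) (.par P' Q)
  | parR (P) : RW Q Q' → RW (.par P Q) (.par P Q')
  | congr : SC P P₁ → RW P₁ P₂ → SC P₂ P' → RW P P'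

/-- Reflexive-transitive closure of the distribution rewriting. -/
def Rws : Proc → Proc → Prop := Relation.ReflTransGen RW

/-- Normal forms for the distribution rewriting. -/
def NF (P : Proc) : Prop := ¬ ∃ P', RW P P'

/-- Prime processes. -/
def IsPrime (P : Proc) : Prop :=
  ¬ Bisim P .nil ∧ ∀ Q R, Bisim P (.par Q R) → Bisim Q .nil ∨ Bisim R .nil

/-- The contribution of a process at a prefix `η`: the total size of its
    top-level parallel components that start with `η`. -/
def contrib (η : Act) : Proc → ℕ
  | .nil => 0
  | .pre η' P => if η' = η then (Proc.pre η' P).size else 0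
  | .par P Q => contrib η P + contrib η Q

-- Part 1: Bisim basics
namespace MicroCCS

theorem isBisim_bisim : IsBisim Bisim := by
  constructor
  · rintro P Q ⟨R, hR, hPQ⟩
    exact ⟨R, hR, hR.1 _ _ hPQ⟩
  · rintro P Q μ P' ⟨R, hR, hPQ⟩ hstep
    obtain ⟨Q', hQ', hR'⟩ := hR.2 _ _ _ _ hPQ hstep
    exact ⟨Q', hQ', R, hR, hR'⟩

theorem bisim_refl (P : Proc) : Bisim P P := by
  refine ⟨Eq, ⟨?_, ?_⟩, rfl⟩
  · rintro P Q rfl; rfl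
  · rintro P Q μ P' rfl h; exact ⟨P', h, rfl⟩

theorem bisim_symm {P Q : Proc} (h : Bisim P Q) : Bisim Q P :=
  isBisim_bisim.1 _ _ h

theorem bisim_step {P Q μ P'} (h : Bisim P Q) (hs : Step P μ P') :
    ∃ Q', Step Q μ Q' ∧ Bisim P' Q' :=
  isBisim_bisim.2 _ _ _ _ h hs

theorem bisim_trans {P Q R : Proc} (h1 : Bisim P Q) (h2 : Bisim Q R) : Bisim P R := by
  refine ⟨fun a c => (∃ b, Bisim a b ∧ Bisim b c) ∨ (∃ b, Bisim c b ∧ Bisim b a), ⟨?_, ?_⟩, Or.inl ⟨Q, h1, h2⟩⟩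
  · rintro a c (⟨b, h, h'⟩ | ⟨b, h, h'⟩)
    · exact Or.inr ⟨b, h, h'⟩
    · exact Or.inl ⟨b, h, h'⟩
  · rintro a c μ a' (⟨b, h, h'⟩ | ⟨b, h, h'⟩) hs
    · obtain ⟨b', hb', h1'⟩ := bisim_step h hs
      obtain ⟨c', hc', h2'⟩ := bisim_step h' hb'
      exact ⟨c', hc', Or.inl ⟨b', h1', h2'⟩⟩
    · obtain ⟨b', hb', h1'⟩ := bisim_step (bisim_symm h') hs
      obtain ⟨c', hc', h2'⟩ := bisim_step (bisim_symm h) hb'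
      exact ⟨c', hc', Or.inr ⟨b', bisim_symm h2', bisim_symm h1'⟩⟩

-- sizes
theorem size_step_act {P P' : Proc} {η : Act} (h : Step P (.act η) P') :
    P'.size + 1 = P.size := by
  generalize hμ : Lab.act η = μ at h
  induction h with
  | pre => cases hμ; simp [Proc.size]; omega
  | syn _ _ => cases hμ
  | parL Q _ ih => subst hμ; have := ih rfl; simp [Proc.size]; omega
  | parR P _ ih => subst hμ; have := ih rfl; simp [Proc.size]; omega

theorem size_step_tau {P P' : Proc} (h : Step P .tau P') :
    P'.size + 2 = P.size := by
  generalize hμ : Lab.tau = μ at h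
  induction h with
  | pre => cases hμ
  | syn h1 h2 =>
    have e1 := size_step_act h1
    have e2 := size_step_act h2
    simp [Proc.size]; omega
  | parL Q _ ih => subst hμ; have := ih rfl; simp [Proc.size]; omega
  | parR P _ ih => subst hμ; have := ih rfl; simp [Proc.size]; omega

theorem exists_step_of_size_pos {P : Proc} (h : 0 < P.size) :
    ∃ η P', Step P (.act η) P' := by
  induction P with
  | nil => simp [Proc.size] at h
  | pre η P _ => exact ⟨η, P, Step.pre η P⟩
  | par P Q ihP ihQ =>
    simp [Proc.size] at h
    rcases (by omega : 0 < P.size ∨ 0 < Q.size) with h' | h'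
    · obtain ⟨η, P', hs⟩ := ihP h'; exact ⟨η, _, Step.parL Q hs⟩
    · obtain ⟨η, Q', hs⟩ := ihQ h'; exact ⟨η, _, Step.parR P hs⟩

theorem no_step_of_size_zero {P : Proc} (h : P.size = 0) {μ P'} : ¬ Step P μ P' := by
  intro hs
  induction hs with
  | pre => simp [Proc.size] at h
  | syn h1 h2 ih1 ih2 => simp [Proc.size] at h; exact ih1 h.1
  | parL Q _ ih => simp [Proc.size] at h; exact ih h.1
  | parR P _ ih => simp [Proc.size] at h; exact ih h.2

theorem bisim_size {P Q : Proc} (h : Bisim P Q) : P.size = Q.size := by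
  by_contra hne
  -- strong induction on max size
  suffices H : ∀ n P Q, P.size ≤ n → Bisim P Q → P.size = Q.size by
    exact hne (H P.size P Q le_rfl h)
  clear hne h P Q
  intro n
  induction n with
  | zero =>
    intro P Q hP h
    have hP0 : P.size = 0 := Nat.le_zero.mp hP
    by_contra hne
    have hQ : 0 < Q.size := by omega
    obtain ⟨η, Q', hs⟩ := exists_step_of_size_pos hQ
    obtain ⟨P', hP', _⟩ := bisim_step (bisim_symm h) hs
    exact no_step_of_size_zero hP0 hP'
  | succ n ih =>
    intro P Q hP h
    rcases Nat.eq_zero_or_pos P.size with h0 | hpos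
    · by_contra hne
      have hQ : 0 < Q.size := by omega
      obtain ⟨η, Q', hs⟩ := exists_step_of_size_pos hQ
      obtain ⟨P', hP', _⟩ := bisim_step (bisim_symm h) hs
      exact no_step_of_size_zero h0 hP'
    · obtain ⟨η, P', hs⟩ := exists_step_of_size_pos hpos
      obtain ⟨Q', hQ', h'⟩ := bisim_step h hs
      have e1 := size_step_act hs
      have e2 := size_step_act hQ'
      have := ih P' Q' (by omega) h'
      omega

theorem bisim_nil_iff {P : Proc} : Bisim P .nil ↔ P.size = 0 := by
  constructor
  · intro h; simpa [Proc.size] using bisim_size h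
  · intro h
    refine ⟨fun a b => a.size = 0 ∧ b.size = 0, ⟨?_, ?_⟩, h, rfl⟩
    · rintro a b ⟨h1, h2⟩; exact ⟨h2, h1⟩
    · rintro a b μ a' ⟨h1, h2⟩ hs
      exact absurd hs (no_step_of_size_zero h1)

end MicroCCS
namespace MicroCCS

theorem co_co (η : Act) : η.co.co = η := by cases η <;> rfl

theorem co_ne (η : Act) : η.co ≠ η := by cases η <;> simp [Act.co]

theorem bisim_par_congr {P P' Q Q' : Proc} (h1 : Bisim P P') (h2 : Bisim Q Q') :
    Bisim (.par P Q) (.par P' Q') := by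
  refine ⟨fun X Y => ∃ a b c d, X = .par a b ∧ Y = .par c d ∧ Bisim a c ∧ Bisim b d,
    ⟨?_, ?_⟩, P, Q, P', Q', rfl, rfl, h1, h2⟩
  · rintro X Y ⟨a, b, c, d, rfl, rfl, h, h'⟩
    exact ⟨c, d, a, b, rfl, rfl, bisim_symm h, bisim_symm h'⟩
  · rintro X Y μ X' ⟨a, b, c, d, rfl, rfl, h, h'⟩ hs
    cases hs with
    | syn hsa hsb =>
      obtain ⟨c', hc, h1'⟩ := bisim_step h hsa
      obtain ⟨d', hd, h2'⟩ := bisim_step h' hsb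
      exact ⟨_, Step.syn hc hd, _, _, _, _, rfl, rfl, h1', h2'⟩
    | parL _ hsa =>
      obtain ⟨c', hc, h1'⟩ := bisim_step h hsa
      exact ⟨_, Step.parL _ hc, _, _, _, _, rfl, rfl, h1', h'⟩
    | parR _ hsb =>
      obtain ⟨d', hd, h2'⟩ := bisim_step h' hsb
      exact ⟨_, Step.parR _ hd, _, _, _, _, rfl, rfl, h, h2'⟩

theorem bisim_pre_congr (η : Act) {P Q : Proc} (h : Bisim P Q) :
    Bisim (.pre η P) (.pre η Q) := by
  refine ⟨fun X Y => (∃ a b, X = .pre η a ∧ Y = .pre η b ∧ Bisim a b) ∨ Bisim X Y,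
    ⟨?_, ?_⟩, Or.inl ⟨P, Q, rfl, rfl, h⟩⟩
  · rintro X Y (⟨a, b, rfl, rfl, h⟩ | h)
    · exact Or.inl ⟨b, a, rfl, rfl, bisim_symm h⟩
    · exact Or.inr (bisim_symm h)
  · rintro X Y μ X' (⟨a, b, rfl, rfl, h⟩ | h) hs
    · cases hs
      exact ⟨b, Step.pre η b, Or.inr h⟩
    · obtain ⟨Y', hY, h'⟩ := bisim_step h hs
      exact ⟨Y', hY, Or.inr h'⟩

theorem bisim_par_comm (P Q : Proc) : Bisim (.par P Q) (.par Q P) := by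
  refine ⟨fun X Y => ∃ a b, X = .par a b ∧ Y = .par b a, ⟨?_, ?_⟩, P, Q, rfl, rfl⟩
  · rintro X Y ⟨a, b, rfl, rfl⟩; exact ⟨b, a, rfl, rfl⟩
  · rintro X Y μ X' ⟨a, b, rfl, rfl⟩ hs
    cases hs with
    | syn hsa hsb =>
      refine ⟨_, Step.syn (η := _) hsb ?_, _, _, rfl, rfl⟩
      rwa [co_co]
    | parL _ hsa => exact ⟨_, Step.parR _ hsa, _, _, rfl, rfl⟩
    | parR _ hsb => exact ⟨_, Step.parL _ hsb, _, _, rfl, rfl⟩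

theorem bisim_par_assoc (P Q R : Proc) : Bisim (.par P (.par Q R)) (.par (.par P Q) R) := by
  refine ⟨fun X Y => (∃ a b c, X = .par a (.par b c) ∧ Y = .par (.par a b) c)
      ∨ (∃ a b c, Y = .par a (.par b c) ∧ X = .par (.par a b) c),
    ⟨?_, ?_⟩, Or.inl ⟨P, Q, R, rfl, rfl⟩⟩
  · rintro X Y (⟨a, b, c, rfl, rfl⟩ | ⟨a, b, c, rfl, rfl⟩)
    · exact Or.inr ⟨a, b, c, rfl, rfl⟩
    · exact Or.inl ⟨a, b, c, rfl, rfl⟩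
  · rintro X Y μ X' (⟨a, b, c, rfl, rfl⟩ | ⟨a, b, c, rfl, rfl⟩) hs
    · cases hs with
      | syn hsa hsbc =>
        cases hsbc with
        | parL _ hsb => exact ⟨_, Step.parL _ (Step.syn hsa hsb), Or.inl ⟨_, _, _, rfl, rfl⟩⟩
        | parR _ hsc => exact ⟨_, Step.syn (Step.parL _ hsa) hsc, Or.inl ⟨_, _, _, rfl, rfl⟩⟩
      | parL _ hsa => exact ⟨_, Step.parL _ (Step.parL _ hsa), Or.inl ⟨_, _, _, rfl, rfl⟩⟩
      | parR _ hsbc =>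
        cases hsbc with
        | syn hsb hsc => exact ⟨_, Step.syn (Step.parR _ hsb) hsc, Or.inl ⟨_, _, _, rfl, rfl⟩⟩
        | parL _ hsb => exact ⟨_, Step.parL _ (Step.parR _ hsb), Or.inl ⟨_, _, _, rfl, rfl⟩⟩
        | parR _ hsc => exact ⟨_, Step.parR _ hsc, Or.inl ⟨_, _, _, rfl, rfl⟩⟩
    · cases hs with
      | syn hsab hsc =>
        cases hsab with
        | parL _ hsa => exact ⟨_, Step.syn hsa (Step.parR _ hsc), Or.inr ⟨_, _, _, rfl, rfl⟩⟩
        | parR _ hsb => exact ⟨_, Step.parR _ (Step.syn hsb hsc), Or.inr ⟨_, _, _, rfl, rfl⟩⟩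
      | parL _ hsab =>
        cases hsab with
        | syn hsa hsb => exact ⟨_, Step.syn hsa (Step.parL _ hsb), Or.inr ⟨_, _, _, rfl, rfl⟩⟩
        | parL _ hsa => exact ⟨_, Step.parL _ hsa, Or.inr ⟨_, _, _, rfl, rfl⟩⟩
        | parR _ hsb => exact ⟨_, Step.parR _ (Step.parL _ hsb), Or.inr ⟨_, _, _, rfl, rfl⟩⟩
      | parR _ hsc => exact ⟨_, Step.parR _ (Step.parR _ hsc), Or.inr ⟨_, _, _, rfl, rfl⟩⟩

theorem bisim_par_nil (P : Proc) : Bisim (.par P .nil) P := by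
  refine ⟨fun X Y => (∃ a, X = .par a .nil ∧ Y = a) ∨ (∃ a, Y = .par a .nil ∧ X = a),
    ⟨?_, ?_⟩, Or.inl ⟨P, rfl, rfl⟩⟩
  · rintro X Y (⟨a, rfl, rfl⟩ | ⟨a, rfl, rfl⟩)
    · exact Or.inr ⟨_, rfl, rfl⟩
    · exact Or.inl ⟨_, rfl, rfl⟩
  · rintro X Y μ X' (⟨a, rfl, rfl⟩ | ⟨a, rfl, rfl⟩) hs
    · cases hs with
      | syn _ h => exact absurd h (no_step_of_size_zero (P := .nil) rfl)
      | parL _ hsa => exact ⟨_, hsa, Or.inl ⟨_, rfl, rfl⟩⟩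
      | parR _ h => exact absurd h (no_step_of_size_zero (P := .nil) rfl)
    · exact ⟨_, Step.parL _ hs, Or.inr ⟨_, rfl, rfl⟩⟩

theorem bisim_par_swap (P Q R : Proc) : Bisim (.par P (.par Q R)) (.par Q (.par P R)) := by
  refine bisim_trans (bisim_par_assoc P Q R) ?_
  refine bisim_trans (bisim_par_congr (bisim_par_comm P Q) (bisim_refl R)) ?_
  exact bisim_symm (bisim_par_assoc Q P R)

theorem bisim_pow_congr {P Q : Proc} (h : Bisim P Q) (n : ℕ) : Bisim (pow P n) (pow Q n) := by
  induction n with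
  | zero => exact bisim_refl _
  | succ n ih => exact bisim_par_congr h ih

theorem bisim_pre_inv {η η' : Act} {B B' : Proc} (h : Bisim (.pre η B) (.pre η' B')) :
    η = η' ∧ Bisim B B' := by
  obtain ⟨X, hX, h'⟩ := bisim_step h (Step.pre η B)
  cases hX
  exact ⟨rfl, h'⟩

end MicroCCS
namespace MicroCCS

/-- Product of a list of processes. -/
def Pl : List Proc → Proc
  | [] => .nil
  | p :: l => .par p (Pl l)

theorem size_Pl (l : List Proc) : (Pl l).size = (l.map Proc.size).sum := by
  induction l with
  | nil => rfl
  | cons p l ih => simp [Pl, Proc.size, ih]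

theorem bisim_Pl_append (l m : List Proc) : Bisim (Pl (l ++ m)) (.par (Pl l) (Pl m)) := by
  induction l with
  | nil => exact bisim_symm (bisim_trans (bisim_par_comm _ _) (bisim_par_nil _))
  | cons p l ih =>
    simp only [List.cons_append, Pl]
    exact bisim_trans (bisim_par_congr (bisim_refl p) ih) (bisim_par_assoc _ _ _)

theorem bisim_Pl_middle (l₁ : List Proc) (x : Proc) (l₂ : List Proc) :
    Bisim (Pl (l₁ ++ x :: l₂)) (.par x (Pl (l₁ ++ l₂))) := by
  induction l₁ with
  | nil => exact bisim_refl _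
  | cons a t ih =>
    simp only [List.cons_append, Pl]
    exact bisim_trans (bisim_par_congr (bisim_refl a) ih) (bisim_par_swap _ _ _)

theorem step_Pl_intro {p p' : Proc} {η : Act} (l₁ l₂ : List Proc)
    (h : Step p (.act η) p') :
    Step (Pl (l₁ ++ p :: l₂)) (.act η) (Pl (l₁ ++ p' :: l₂)) := by
  induction l₁ with
  | nil => exact Step.parL _ h
  | cons a t ih => exact Step.parR _ ih

theorem step_Pl_inv {l : List Proc} {η : Act} {X : Proc}
    (h : Step (Pl l) (.act η) X) :
    ∃ l₁ p l₂ p', l = l₁ ++ p :: l₂ ∧ Step p (.act η) p' ∧ X = Pl (l₁ ++ p' :: l₂) := by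
  induction l generalizing X with
  | nil => exact absurd h (no_step_of_size_zero (P := .nil) rfl)
  | cons a t ih =>
    cases h with
    | parL _ hs => exact ⟨[], a, t, _, rfl, hs, rfl⟩
    | parR _ hs =>
      obtain ⟨l₁, p, l₂, p', rfl, hstep, rfl⟩ := ih hs
      exact ⟨a :: l₁, p, l₂, p', rfl, hstep, rfl⟩

/-- Enabled actions. -/
def CanStep (P : Proc) (η : Act) : Prop := ∃ P', Step P (.act η) P'

theorem canStep_congr {P Q : Proc} (h : Bisim P Q) {η : Act} (hc : CanStep P η) :
    CanStep Q η := by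
  obtain ⟨P', hs⟩ := hc
  obtain ⟨Q', hQ, _⟩ := bisim_step h hs
  exact ⟨Q', hQ⟩

theorem canStep_pre_iff {η γ : Act} {B : Proc} : CanStep (.pre η B) γ ↔ γ = η := by
  constructor
  · rintro ⟨P', hs⟩; cases hs; rfl
  · rintro rfl; exact ⟨B, Step.pre _ B⟩

theorem canStep_Pl_iff {l : List Proc} {γ : Act} :
    CanStep (Pl l) γ ↔ ∃ p ∈ l, CanStep p γ := by
  constructor
  · rintro ⟨X, hs⟩
    obtain ⟨l₁, p, l₂, p', rfl, hstep, rfl⟩ := step_Pl_inv hs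
    exact ⟨p, by simp, p', hstep⟩
  · rintro ⟨p, hp, p', hs⟩
    obtain ⟨l₁, l₂, rfl⟩ := List.append_of_mem hp
    exact ⟨_, step_Pl_intro l₁ l₂ hs⟩

theorem Pl_replicate (q : Proc) (s : ℕ) : Pl (List.replicate s q) = pow q s := by
  induction s with
  | zero => rfl
  | succ s ih => simp [List.replicate, Pl, pow, ih]

theorem step_pow_inv {η : Act} {Y X : Proc} {μ : Lab} {k : ℕ}
    (h : Step (pow (.pre η Y) k) μ X) :
    1 ≤ k ∧ μ = .act η ∧ Bisim X (.par Y (pow (.pre η Y) (k - 1))) := by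
  induction k generalizing X μ with
  | zero => exact absurd h (no_step_of_size_zero (P := .nil) rfl)
  | succ k ih =>
    cases h with
    | syn h1 h2 =>
      cases h1
      obtain ⟨_, he, _⟩ := ih h2
      have : η.co = η := by injection he
      exact absurd this (co_ne η)
    | parL _ hs =>
      cases hs
      refine ⟨Nat.succ_le_succ (Nat.zero_le k), rfl, ?_⟩
      rw [Nat.add_sub_cancel]
      exact bisim_refl _
    | @parR _ Q' _ _ hs =>
      obtain ⟨hk, rfl, hb⟩ := ih hs
      refine ⟨Nat.succ_le_succ (Nat.zero_le k), rfl, ?_⟩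
      rw [Nat.add_sub_cancel]
      have h2 : Bisim (Proc.par (.pre η Y) Q') (.par (.pre η Y) (.par Y (pow (.pre η Y) (k-1)))) :=
        bisim_par_congr (bisim_refl _) hb
      refine bisim_trans h2 (bisim_trans (bisim_par_swap _ _ _) (bisim_par_congr (bisim_refl Y) ?_))
      have hk1 : k - 1 + 1 = k := by omega
      conv_rhs => rw [← hk1]
      exact bisim_refl _

/-- Soundness of the distribution law. -/
theorem bisim_dist (η : Act) (Y : Proc) (s : ℕ) :
    Bisim (.pre η (.par Y (pow (.pre η Y) s))) (pow (.pre η Y) (s + 1)) := by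
  refine ⟨fun A B => (A = .pre η (.par Y (pow (.pre η Y) s)) ∧ B = pow (.pre η Y) (s+1))
      ∨ (B = .pre η (.par Y (pow (.pre η Y) s)) ∧ A = pow (.pre η Y) (s+1))
      ∨ Bisim A B, ⟨?_, ?_⟩, Or.inl ⟨rfl, rfl⟩⟩
  · rintro A B (⟨rfl, rfl⟩ | ⟨rfl, rfl⟩ | h)
    · exact Or.inr (Or.inl ⟨rfl, rfl⟩)
    · exact Or.inl ⟨rfl, rfl⟩
    · exact Or.inr (Or.inr (bisim_symm h))
  · rintro A B μ A' (⟨rfl, rfl⟩ | ⟨rfl, rfl⟩ | h) hs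
    · cases hs
      refine ⟨.par Y (pow (.pre η Y) s), Step.parL _ (Step.pre η Y), Or.inr (Or.inr (bisim_refl _))⟩
    · obtain ⟨hk, rfl, hb⟩ := step_pow_inv hs
      simp only [Nat.add_sub_cancel] at hb
      exact ⟨_, Step.pre η _, Or.inr (Or.inr hb)⟩
    · obtain ⟨B', hB, h'⟩ := bisim_step h hs
      exact ⟨B', hB, Or.inr (Or.inr h')⟩

end MicroCCS
namespace MicroCCS
attribute [local instance 10] Classical.propDecidable

theorem isPrime_congr {P Q : Proc} (h : Bisim P Q) (hp : IsPrime P) : IsPrime Q := by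
  constructor
  · intro hn; exact hp.1 (bisim_trans h hn)
  · intro A B hAB; exact hp.2 A B (bisim_trans h hAB)

theorem prime_size_pos {P : Proc} (hp : IsPrime P) : 0 < P.size := by
  rcases Nat.eq_zero_or_pos P.size with h | h
  · exact absurd (bisim_nil_iff.mpr h) hp.1
  · exact h

theorem prime_repr {p : Proc} (hp : IsPrime p) : ∃ η B, Bisim p (.pre η B) := by
  induction p with
  | nil => exact absurd (bisim_refl _) hp.1
  | pre η B _ => exact ⟨η, B, bisim_refl _⟩
  | par P Q ihP ihQ =>
    rcases hp.2 P Q (bisim_refl _) with h | h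
    · have hb : Bisim (Proc.par P Q) Q :=
        bisim_trans (bisim_par_congr h (bisim_refl Q))
          (bisim_trans (bisim_par_comm _ _) (bisim_par_nil Q))
      obtain ⟨η, B, h'⟩ := ihQ (isPrime_congr hb hp)
      exact ⟨η, B, bisim_trans hb h'⟩
    · have hb : Bisim (Proc.par P Q) P :=
        bisim_trans (bisim_par_congr (bisim_refl P) h) (bisim_par_nil P)
      obtain ⟨η, B, h'⟩ := ihP (isPrime_congr hb hp)
      exact ⟨η, B, bisim_trans hb h'⟩

/-- Canonical head and body of a process (meaningful for primes). -/
noncomputable def hdbd (p : Proc) : Act × Proc :=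
  if h : ∃ x : Act × Proc, Bisim p (.pre x.1 x.2) then h.choose else (.inp 0, .nil)

theorem hdbd_spec {p : Proc} (hp : IsPrime p) : Bisim p (.pre (hdbd p).1 (hdbd p).2) := by
  obtain ⟨η, B, h⟩ := prime_repr hp
  have hx : ∃ x : Act × Proc, Bisim p (.pre x.1 x.2) := ⟨(η, B), h⟩
  rw [hdbd, dif_pos hx]
  exact hx.choose_spec

theorem prime_step {p : Proc} (hp : IsPrime p) {μ X} (h : Step p μ X) :
    μ = .act (hdbd p).1 ∧ Bisim X (hdbd p).2 := by
  obtain ⟨Y, hY, h'⟩ := bisim_step (hdbd_spec hp) h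
  cases hY
  exact ⟨rfl, h'⟩

theorem prime_canStep {p : Proc} (hp : IsPrime p) : CanStep p (hdbd p).1 := by
  obtain ⟨η, X, hs⟩ := exists_step_of_size_pos (prime_size_pos hp)
  obtain ⟨he, _⟩ := prime_step hp hs
  cases he
  exact ⟨X, hs⟩

theorem prime_size_eq {p : Proc} (hp : IsPrime p) : p.size = 1 + (hdbd p).2.size := by
  simpa [Proc.size] using bisim_size (hdbd_spec hp)

/-- Existence of a prime decomposition. -/
theorem decomp_exists (P : Proc) : ∃ l : List Proc, (∀ p ∈ l, IsPrime p) ∧ Bisim P (Pl l) := by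
  suffices H : ∀ n P, P.size ≤ n → ∃ l : List Proc, (∀ p ∈ l, IsPrime p) ∧ Bisim P (Pl l) by
    exact H P.size P le_rfl
  intro n
  induction n with
  | zero =>
    intro P hP
    exact ⟨[], by simp, bisim_nil_iff.mpr (Nat.le_zero.mp hP)⟩
  | succ n ih =>
    intro P hP
    rcases Nat.eq_zero_or_pos P.size with h0 | hpos
    · exact ⟨[], by simp, bisim_nil_iff.mpr h0⟩
    by_cases hp : IsPrime P
    · refine ⟨[P], by simpa using hp, ?_⟩
      exact bisim_symm (bisim_par_nil P)
    · have hnn : ¬ Bisim P .nil := by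
        rw [bisim_nil_iff]; omega
      rw [IsPrime] at hp
      push_neg at hp
      obtain ⟨A, B, hAB, hA, hB⟩ := hp hnn
      have hsz : P.size = A.size + B.size := by simpa [Proc.size] using bisim_size hAB
      have hA1 : 0 < A.size := by
        rcases Nat.eq_zero_or_pos A.size with h | h
        · exact absurd (bisim_nil_iff.mpr h) hA
        · exact h
      have hB1 : 0 < B.size := by
        rcases Nat.eq_zero_or_pos B.size with h | h
        · exact absurd (bisim_nil_iff.mpr h) hB
        · exact h
      obtain ⟨lA, hlA, hbA⟩ := ih A (by omega)
      obtain ⟨lB, hlB, hbB⟩ := ih B (by omega)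
      refine ⟨lA ++ lB, ?_, ?_⟩
      · intro p hp'
        rcases List.mem_append.mp hp' with h | h
        · exact hlA p h
        · exact hlB p h
      · exact bisim_trans hAB (bisim_trans (bisim_par_congr hbA hbB)
          (bisim_symm (bisim_Pl_append lA lB)))

/-- A canonical prime decomposition of the body of a prime. -/
noncomputable def Dl (p : Proc) : List Proc := (decomp_exists (hdbd p).2).choose

theorem Dl_prime {p : Proc} : ∀ q ∈ Dl p, IsPrime q := (decomp_exists (hdbd p).2).choose_spec.1

theorem Dl_bisim (p : Proc) : Bisim (hdbd p).2 (Pl (Dl p)) := (decomp_exists (hdbd p).2).choose_spec.2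

theorem Dl_size {p : Proc} (hp : IsPrime p) : (Pl (Dl p)).size + 1 = p.size := by
  have := bisim_size (Dl_bisim p)
  have := prime_size_eq hp
  omega

/-- Counting elements bisimilar to `z`. -/
noncomputable def cnt (z : Proc) : List Proc → ℕ
  | [] => 0
  | a :: t => (if Bisim z a then 1 else 0) + cnt z t

theorem cnt_append (z : Proc) (l m : List Proc) : cnt z (l ++ m) = cnt z l + cnt z m := by
  induction l with
  | nil => simp [cnt]
  | cons a t ih => simp [cnt, ih]; omega

theorem cnt_congr {z z' : Proc} (h : Bisim z z') (l : List Proc) : cnt z l = cnt z' l := by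
  induction l with
  | nil => rfl
  | cons a t ih =>
    simp only [cnt, ih]
    congr 1
    by_cases hb : Bisim z a
    · rw [if_pos hb, if_pos (bisim_trans (bisim_symm h) hb)]
    · rw [if_neg hb, if_neg (fun hc => hb (bisim_trans h hc))]

theorem cnt_pos_iff {z : Proc} {l : List Proc} : 0 < cnt z l ↔ ∃ p ∈ l, Bisim z p := by
  induction l with
  | nil => simp [cnt]
  | cons a t ih =>
    simp only [cnt, List.mem_cons]
    by_cases hb : Bisim z a
    · rw [if_pos hb]
      constructor
      · intro _; exact ⟨a, Or.inl rfl, hb⟩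
      · intro _; omega
    · rw [if_neg hb, Nat.zero_add, ih]
      constructor
      · rintro ⟨p, hp, h⟩; exact ⟨p, Or.inr hp, h⟩
      · rintro ⟨p, (rfl | hp), h⟩
        · exact absurd h hb
        · exact ⟨p, hp, h⟩

theorem cnt_replicate (z q : Proc) (s : ℕ) :
    cnt z (List.replicate s q) = s * (if Bisim z q then 1 else 0) := by
  induction s with
  | zero => simp [cnt]
  | succ s ih =>
    rw [List.replicate_succ]
    simp only [cnt, ih]
    by_cases h : Bisim z q <;> simp [h] <;> ring

theorem cnt_self_mem {z : Proc} {l : List Proc} (h : z ∈ l) : 0 < cnt z l :=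
  cnt_pos_iff.mpr ⟨z, h, bisim_refl z⟩

theorem cnt_mem_of_pos {z : Proc} {l : List Proc} (h : 0 < cnt z l) : ∃ p ∈ l, Bisim z p :=
  cnt_pos_iff.mp h

/-- If two lists have the same counts everywhere, their products are bisimilar. -/
theorem cnt_eq_bisim : ∀ (l m : List Proc), (∀ z, cnt z l = cnt z m) → Bisim (Pl l) (Pl m) := by
  intro l
  induction l with
  | nil =>
    intro m h
    cases m with
    | nil => exact bisim_refl _
    | cons b t =>
      exfalso
      have h2 := h b
      rw [show cnt b [] = 0 from rfl] at h2
      have hb : 0 < cnt b (b :: t) := cnt_self_mem (by simp)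
      omega
  | cons a t ih =>
    intro m h
    have ha : 0 < cnt a m := by
      rw [← h a]; exact cnt_self_mem (by simp)
    obtain ⟨b, hb, hab⟩ := cnt_mem_of_pos ha
    obtain ⟨m₁, m₂, rfl⟩ := List.append_of_mem hb
    have hres : ∀ z, cnt z t = cnt z (m₁ ++ m₂) := by
      intro z
      have h1 := h z
      rw [cnt_append] at h1
      simp only [cnt] at h1
      rw [cnt_append]
      have : (if Bisim z a then 1 else 0) = (if Bisim z b then 1 else 0) := by
        by_cases hz : Bisim z a
        · rw [if_pos hz, if_pos (bisim_trans hz hab)]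
        · rw [if_neg hz, if_neg (fun hc => hz (bisim_trans hc (bisim_symm hab)))]
      omega
    have hPl : Bisim (Pl t) (Pl (m₁ ++ m₂)) := ih _ hres
    refine bisim_trans (bisim_par_congr hab hPl) ?_
    exact bisim_symm (bisim_Pl_middle m₁ b m₂)

end MicroCCS
namespace MicroCCS
attribute [local instance 10] Classical.propDecidable

theorem mem_size_le {p : Proc} {l : List Proc} (h : p ∈ l) : p.size ≤ (Pl l).size := by
  induction l with
  | nil => cases h
  | cons a t ih =>
    rcases List.mem_cons.mp h with rfl | h'
    · simp only [Pl, Proc.size]; omega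
    · have := ih h'; simp only [Pl, Proc.size]; omega

theorem cnt_Dl_lt {c z : Proc} (hc : IsPrime c) (h : 0 < cnt z (Dl c)) :
    z.size < c.size := by
  obtain ⟨q, hq, hzq⟩ := cnt_mem_of_pos h
  have h1 : q.size ≤ (Pl (Dl c)).size := mem_size_le hq
  have h2 := Dl_size hc
  have h3 := bisim_size hzq
  omega

theorem size_pow (P : Proc) (k : ℕ) : (pow P k).size = k * P.size := by
  induction k with
  | zero => simp [pow, Proc.size]
  | succ k ih => simp only [pow, Proc.size, ih]; ring

/-- Abbreviation for the induction hypothesis of the uniqueness theorem. -/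
def UH (n : ℕ) : Prop :=
  ∀ l m : List Proc, (∀ p ∈ l, IsPrime p) → (∀ p ∈ m, IsPrime p) →
    Bisim (Pl l) (Pl m) → (Pl l).size ≤ n → ∀ z, cnt z l = cnt z m

/-- Bodies of bisimilar primes have equal prime counts. -/
theorem bodies_cnt_eq {n : ℕ} (IH : UH n) {p p' : Proc}
    (hp : IsPrime p) (hp' : IsPrime p') (hb : Bisim p p') (hsz : p.size ≤ n + 1) :
    ∀ z, cnt z (Dl p) = cnt z (Dl p') := by
  have h1 := hdbd_spec hp
  have h2 := hdbd_spec hp'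
  have h3 : Bisim (.pre (hdbd p).1 (hdbd p).2) (.pre (hdbd p').1 (hdbd p').2) :=
    bisim_trans (bisim_symm h1) (bisim_trans hb h2)
  obtain ⟨-, hbody⟩ := bisim_pre_inv h3
  have hPl : Bisim (Pl (Dl p)) (Pl (Dl p')) :=
    bisim_trans (bisim_symm (Dl_bisim p)) (bisim_trans hbody (Dl_bisim p'))
  have hsz' : (Pl (Dl p)).size ≤ n := by
    have := Dl_size hp; omega
  exact IH (Dl p) (Dl p') (fun q hq => Dl_prime q hq) (fun q hq => Dl_prime q hq) hPl hsz'

/-- The matching lemma: each prime on the left is matched by a prime on the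
right with the same head, with the expected effect on prime counts. -/
theorem match_step {n : ℕ} (IH : UH n)
    {l m : List Proc} (hl : ∀ p ∈ l, IsPrime p) (hm : ∀ p ∈ m, IsPrime p)
    (hb : Bisim (Pl l) (Pl m)) (hs : (Pl l).size ≤ n + 1)
    {p : Proc} (hp : p ∈ l) :
    ∃ q ∈ m, (hdbd q).1 = (hdbd p).1 ∧
      ∀ z, (cnt z l : ℤ) - (if Bisim z p then 1 else 0) + cnt z (Dl p)
         = (cnt z m : ℤ) - (if Bisim z q then 1 else 0) + cnt z (Dl q) := by
  obtain ⟨l₁, l₂, rfl⟩ := List.append_of_mem hp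
  have hpP : IsPrime p := hl p hp
  obtain ⟨p₀, hstep, hbp₀⟩ := bisim_step (bisim_symm (hdbd_spec hpP)) (Step.pre (hdbd p).1 (hdbd p).2)
  have S1 : Step (Pl (l₁ ++ p :: l₂)) (.act (hdbd p).1) (Pl (l₁ ++ p₀ :: l₂)) :=
    step_Pl_intro l₁ l₂ hstep
  obtain ⟨Y, hY, hbY⟩ := bisim_step hb S1
  obtain ⟨m₁, q, m₂, q₀, rfl, hqstep, rfl⟩ := step_Pl_inv hY
  have hqm : q ∈ m₁ ++ q :: m₂ := by simp
  have hqP : IsPrime q := hm q hqm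
  obtain ⟨hlab, hbq₀⟩ := prime_step hqP hqstep
  have hhd : (hdbd q).1 = (hdbd p).1 := by injection hlab.symm
  refine ⟨q, hqm, hhd, ?_⟩
  -- the two derivative lists
  have hL : Bisim (Pl (Dl p ++ (l₁ ++ l₂))) (Pl (Dl q ++ (m₁ ++ m₂))) := by
    refine bisim_trans (bisim_Pl_append _ _) ?_
    refine bisim_trans (bisim_par_congr
      (bisim_trans (bisim_symm (Dl_bisim p)) hbp₀) (bisim_refl _)) ?_
    refine bisim_trans (bisim_symm (bisim_Pl_middle l₁ p₀ l₂)) ?_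
    refine bisim_trans hbY ?_
    refine bisim_trans (bisim_Pl_middle m₁ q₀ m₂) ?_
    refine bisim_trans (bisim_par_congr
      (bisim_trans hbq₀ (Dl_bisim q)) (bisim_refl _)) ?_
    exact bisim_symm (bisim_Pl_append _ _)
  have hszL : (Pl (Dl p ++ (l₁ ++ l₂))).size ≤ n := by
    have e1 : (Pl (Dl p ++ (l₁ ++ l₂))).size = (Pl (l₁ ++ p₀ :: l₂)).size := by
      have := bisim_size (bisim_trans (bisim_Pl_append (Dl p) (l₁ ++ l₂))
        (bisim_trans (bisim_par_congr
          (bisim_trans (bisim_symm (Dl_bisim p)) hbp₀) (bisim_refl _))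
          (bisim_symm (bisim_Pl_middle l₁ p₀ l₂))))
      omega
    have e2 := size_step_act S1
    omega
  have key := IH _ _
    (by intro x hx; rcases List.mem_append.mp hx with h | h
        · exact Dl_prime x h
        · exact hl x (by rcases List.mem_append.mp h with h | h
                         · exact List.mem_append.mpr (Or.inl h)
                         · exact List.mem_append.mpr (Or.inr (List.mem_cons_of_mem _ h))))
    (by intro x hx; rcases List.mem_append.mp hx with h | h
        · exact Dl_prime x h
        · exact hm x (by rcases List.mem_append.mp h with h | h
                         · exact List.mem_append.mpr (Or.inl h)
                         · exact List.mem_append.mpr (Or.inr (List.mem_cons_of_mem _ h))))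
    hL hszL
  intro z
  have hk := key z
  rw [cnt_append, cnt_append, cnt_append, cnt_append] at hk
  have e3 : cnt z (l₁ ++ p :: l₂) = cnt z l₁ + ((if Bisim z p then 1 else 0) + cnt z l₂) := by
    rw [cnt_append]; rfl
  have e4 : cnt z (m₁ ++ q :: m₂) = cnt z m₁ + ((if Bisim z q then 1 else 0) + cnt z m₂) := by
    rw [cnt_append]; rfl
  rw [e3, e4]
  push_cast
  omega

end MicroCCS
namespace MicroCCS
attribute [local instance 10] Classical.propDecidable

set_option maxHeartbeats 1000000 in
theorem no_excess {n : ℕ} (IH : UH n) {l m : List Proc}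
    (hl : ∀ p ∈ l, IsPrime p) (hm : ∀ p ∈ m, IsPrime p)
    (hb : Bisim (Pl l) (Pl m)) (hs : (Pl l).size ≤ n + 1)
    {pstar : Proc}
    (hpos : cnt pstar m < cnt pstar l)
    (hmax : ∀ w ∈ l ++ m, cnt w l ≠ cnt w m → w.size ≤ pstar.size) : False := by
  have hsm : (Pl m).size ≤ n + 1 := by rw [← bisim_size hb]; exact hs
  -- representative of pstar in l
  obtain ⟨p, hpl, hpp⟩ := cnt_mem_of_pos (l := l) (z := pstar) (by omega)
  have hppr : IsPrime p := hl p hpl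
  have hpsize : p.size = pstar.size := (bisim_size hpp).symm
  have hpbound : p.size ≤ n + 1 := le_trans (mem_size_le hpl) hs
  -- counts transfer along pstar ∼ p
  have hcl : ∀ L, cnt pstar L = cnt p L := fun L => cnt_congr hpp L
  obtain ⟨q, hqm, hhd, eq1⟩ := match_step IH hl hm hb hs hpl
  have hqpr : IsPrime q := hm q hqm
  -- Step A : pstar is not bisimilar to q
  have hpq : ¬ Bisim pstar q := by
    intro hq
    have hpq' : Bisim p q := bisim_trans (bisim_symm hpp) hq
    have hD := bodies_cnt_eq IH hppr hqpr hpq' hpbound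
    have h1 := eq1 pstar
    rw [if_pos hpp, if_pos hq, hD pstar] at h1
    have := hcl l
    have := hcl m
    omega
  have hq_not_p : ¬ Bisim q p := fun h => hpq (bisim_trans hpp (bisim_symm h))
  -- Step B
  set s := cnt q (Dl p) with hs_def
  have hqDq : cnt q (Dl q) = 0 := by
    by_contra h
    exact absurd (cnt_Dl_lt hqpr (Nat.pos_of_ne_zero h)) (lt_irrefl _)
  have hdq : (cnt q l : ℤ) - cnt q m = -1 - s := by
    have h1 := eq1 q
    rw [if_neg hq_not_p, if_pos (bisim_refl q), hqDq] at h1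
    push_cast at h1 ⊢
    omega
  -- Step C
  have hq_size : q.size ≤ pstar.size := by
    refine hmax q (List.mem_append.mpr (Or.inr hqm)) ?_
    intro h; rw [h] at hdq; omega
  -- Step D
  have hpD0 : cnt pstar (Dl p) = 0 := by
    by_contra h
    have := cnt_Dl_lt hppr (Nat.pos_of_ne_zero h)
    omega
  have hqD0 : cnt pstar (Dl q) = 0 := by
    by_contra h
    have := cnt_Dl_lt hqpr (Nat.pos_of_ne_zero h)
    omega
  have hd1 : (cnt pstar l : ℤ) - cnt pstar m = 1 := by
    have h1 := eq1 pstar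
    rw [if_pos hpp, if_neg hpq, hpD0, hqD0] at h1
    push_cast at h1 ⊢
    omega
  -- Step E : support of the difference is {pstar, q}
  have hsupp : ∀ w, cnt w l ≠ cnt w m → Bisim w pstar ∨ Bisim w q := by
    intro w hw
    by_contra hcon
    push_neg at hcon
    obtain ⟨hwp, hwq⟩ := hcon
    have hw_not_p : ¬ Bisim w p := fun h => hwp (bisim_trans h (bisim_symm hpp))
    have h4 := eq1 w
    rw [if_neg hw_not_p, if_neg hwq] at h4
    rcases Nat.lt_or_ge (cnt w l) (cnt w m) with hlt | hge
    · -- negative difference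
      have hDp_pos : 0 < cnt w (Dl p) := by omega
      have hw_lt : w.size < pstar.size := by
        have := cnt_Dl_lt hppr hDp_pos; omega
      obtain ⟨w2, hw2m, hww2⟩ := cnt_mem_of_pos (l := m) (z := w) (by omega)
      have hw2pr : IsPrime w2 := hm w2 hw2m
      have hw2size : w2.size = w.size := (bisim_size hww2).symm
      obtain ⟨phat, hphatl, hhd2, eq2⟩ := match_step IH hm hl (bisim_symm hb) hsm hw2m
      have hphpr : IsPrime phat := hl phat hphatl
      have h2 := eq2 pstar
      have hps_w2 : ¬ Bisim pstar w2 := fun h => hwp (bisim_symm (bisim_trans h (bisim_symm hww2)))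
      have hDw2 : cnt pstar (Dl w2) = 0 := by
        by_contra h
        have := cnt_Dl_lt hw2pr (Nat.pos_of_ne_zero h)
        omega
      rw [if_neg hps_w2, hDw2] at h2
      -- deduce pstar ∼ phat
      have hphat_ps : Bisim pstar phat := by
        by_contra h
        rw [if_neg h] at h2
        have : (0:ℤ) ≤ cnt pstar (Dl phat) := by positivity
        omega
      rw [if_pos hphat_ps] at h2
      have hDphat_eq := bodies_cnt_eq IH hphpr hppr
        (bisim_trans (bisim_symm hphat_ps) hpp) (le_trans (mem_size_le hphatl) hs)
      have h3 := eq2 w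
      have hw_w2 : Bisim w w2 := hww2
      have hDw2w : cnt w (Dl w2) = 0 := by
        by_contra h
        have := cnt_Dl_lt hw2pr (Nat.pos_of_ne_zero h)
        omega
      have hw_not_phat : ¬ Bisim w phat :=
        fun h => hwp (bisim_trans h (bisim_symm hphat_ps))
      rw [if_pos hw_w2, if_neg hw_not_phat, hDw2w, hDphat_eq w] at h3
      have hDq_nonneg : (0:ℤ) ≤ cnt w (Dl q) := by positivity
      omega
    · -- positive difference
      have hlt : cnt w m < cnt w l := by omega
      have hDq_pos : 0 < cnt w (Dl q) := by omega
      have hw_lt_q : w.size < q.size := cnt_Dl_lt hqpr hDq_pos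
      obtain ⟨w2, hw2l, hww2⟩ := cnt_mem_of_pos (l := l) (z := w) (by omega)
      have hw2pr : IsPrime w2 := hl w2 hw2l
      have hw2size : w2.size = w.size := (bisim_size hww2).symm
      obtain ⟨qhat, hqhatm, hhd3, eq3⟩ := match_step IH hl hm hb hs hw2l
      have hqhpr : IsPrime qhat := hm qhat hqhatm
      have h2 := eq3 pstar
      have hps_w2 : ¬ Bisim pstar w2 := fun h => hwp (bisim_symm (bisim_trans h (bisim_symm hww2)))
      have hDw2 : cnt pstar (Dl w2) = 0 := by
        by_contra h
        have := cnt_Dl_lt hw2pr (Nat.pos_of_ne_zero h)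
        omega
      rw [if_neg hps_w2, hDw2] at h2
      have hqhat_big : pstar.size < qhat.size := by
        refine cnt_Dl_lt hqhpr (Nat.pos_of_ne_zero ?_)
        intro h0
        rw [h0] at h2
        by_cases hps_qh : Bisim pstar qhat
        · rw [if_pos hps_qh] at h2; omega
        · rw [if_neg hps_qh] at h2; omega
      have hqhat_d0 : cnt qhat l = cnt qhat m := by
        by_contra h
        have := hmax qhat (List.mem_append.mpr (Or.inr hqhatm)) h
        omega
      have h5 := eq3 qhat
      have hqh_w2 : ¬ Bisim qhat w2 := by
        intro h
        have := bisim_size h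
        omega
      have hqhDw2 : cnt qhat (Dl w2) = 0 := by
        by_contra h
        have := cnt_Dl_lt hw2pr (Nat.pos_of_ne_zero h)
        omega
      have hqhDqh : cnt qhat (Dl qhat) = 0 := by
        by_contra h
        exact absurd (cnt_Dl_lt hqhpr (Nat.pos_of_ne_zero h)) (lt_irrefl _)
      rw [if_neg hqh_w2, if_pos (bisim_refl qhat), hqhDw2, hqhDqh] at h5
      omega
  -- Step F : p is a distribution redex, contradicting primality
  have hkey : ∀ z, cnt z (Dl p) = cnt z (Dl q ++ List.replicate s q) := by
    intro z
    rw [cnt_append, cnt_replicate]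
    by_cases hzq : Bisim z q
    · rw [if_pos hzq, cnt_congr hzq (Dl p), cnt_congr hzq (Dl q), hqDq, ← hs_def]
      omega
    · rw [if_neg hzq]
      by_cases hzp : Bisim z pstar
      · rw [cnt_congr hzp (Dl p), cnt_congr hzp (Dl q), hpD0, hqD0]
        simp
      · have hdz : cnt z l = cnt z m := by
          by_contra h
          rcases hsupp z h with h' | h'
          · exact hzp h'
          · exact hzq h'
        have h4 := eq1 z
        have hz_not_p : ¬ Bisim z p := fun h => hzp (bisim_trans h (bisim_symm hpp))
        rw [if_neg hz_not_p, if_neg hzq, hdz] at h4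
        omega
  have hs1 : 1 ≤ s := by
    rcases Nat.eq_zero_or_pos s with h0 | h1
    · exfalso
      have hD_eq : ∀ z, cnt z (Dl p) = cnt z (Dl q) := by
        intro z
        have := hkey z
        rwa [h0, List.replicate_zero, List.append_nil] at this
      have hbody : Bisim (Pl (Dl p)) (Pl (Dl q)) := cnt_eq_bisim _ _ hD_eq
      have hpq2 : Bisim p q := by
        refine bisim_trans (hdbd_spec hppr) (bisim_trans ?_ (bisim_symm (hdbd_spec hqpr)))
        rw [← hhd]
        exact bisim_pre_congr _ (bisim_trans (Dl_bisim p)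
          (bisim_trans hbody (bisim_symm (Dl_bisim q))))
      exact hpq (bisim_trans hpp hpq2)
    · exact h1
  set η := (hdbd p).1 with hη
  set Y := Pl (Dl q) with hY
  set qq := Proc.pre η Y with hqq
  have hqqq : Bisim q qq := by
    have h1 : Bisim (.pre (hdbd q).1 (hdbd q).2) qq := by
      rw [hqq, ← hhd]
      exact bisim_pre_congr _ (Dl_bisim q)
    exact bisim_trans (hdbd_spec hqpr) h1
  have hbodyp : Bisim (Pl (Dl p)) (.par Y (pow qq s)) := by
    refine bisim_trans (cnt_eq_bisim _ _ hkey) ?_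
    refine bisim_trans (bisim_Pl_append _ _) ?_
    rw [Pl_replicate]
    exact bisim_par_congr (bisim_refl Y) (bisim_pow_congr hqqq s)
  have hPfin : Bisim p (.par qq (pow qq s)) := by
    have h1 : Bisim p (.pre η (.par Y (pow qq s))) := by
      refine bisim_trans (hdbd_spec hppr) ?_
      exact bisim_pre_congr _ (bisim_trans (Dl_bisim p) hbodyp)
    exact bisim_trans h1 (bisim_dist η Y s)
  have hqqsize : qq.size = 1 + Y.size := rfl
  rcases hppr.2 _ _ hPfin with hnil | hnil
  · rw [bisim_nil_iff] at hnil
    omega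
  · rw [bisim_nil_iff, size_pow] at hnil
    rcases Nat.mul_eq_zero.mp hnil with h | h <;> omega

end MicroCCS
namespace MicroCCS
attribute [local instance 10] Classical.propDecidable

theorem exists_max_size {L : List Proc} {P : Proc → Prop} (h : ∃ w ∈ L, P w) :
    ∃ w ∈ L, P w ∧ ∀ w' ∈ L, P w' → w'.size ≤ w.size := by
  induction L with
  | nil => obtain ⟨w, hw, _⟩ := h; cases hw
  | cons a t ih =>
    by_cases hex : ∃ w ∈ t, P w
    · obtain ⟨w, hwt, hPw, hmax⟩ := ih hex
      by_cases ha : P a ∧ w.size ≤ a.size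
      · refine ⟨a, by simp, ha.1, ?_⟩
        rintro w' hw' hPw'
        rcases List.mem_cons.mp hw' with rfl | hw't
        · exact le_refl _
        · exact le_trans (hmax w' hw't hPw') ha.2
      · refine ⟨w, List.mem_cons_of_mem _ hwt, hPw, ?_⟩
        rintro w' hw' hPw'
        rcases List.mem_cons.mp hw' with rfl | hw't
        · by_cases h2 : w.size ≤ w'.size
          · exact absurd ⟨hPw', h2⟩ ha
          · omega
        · exact hmax w' hw't hPw'
    · obtain ⟨w, hw, hPw⟩ := h
      rcases List.mem_cons.mp hw with rfl | hwt
      · refine ⟨w, by simp, hPw, ?_⟩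
        rintro w' hw' hPw'
        rcases List.mem_cons.mp hw' with rfl | hw't
        · exact le_refl _
        · exact absurd ⟨w', hw't, hPw'⟩ hex
      · exact absurd ⟨w, hwt, hPw⟩ hex

theorem uh_all : ∀ n, UH n := by
  intro n
  induction n with
  | zero =>
    intro l m hl hm hb hsz z
    have hl0 : l = [] := by
      cases l with
      | nil => rfl
      | cons a t =>
        have h1 := prime_size_pos (hl a (by simp))
        have h2 := mem_size_le (p := a) (l := a :: t) (by simp)
        omega
    have hszm : (Pl m).size = 0 := by
      have := bisim_size hb; omega
    have hm0 : m = [] := by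
      cases m with
      | nil => rfl
      | cons a t =>
        have h1 := prime_size_pos (hm a (by simp))
        have h2 := mem_size_le (p := a) (l := a :: t) (by simp)
        omega
    rw [hl0, hm0]
  | succ n ih =>
    intro l m hl hm hb hsz
    by_contra hne
    push_neg at hne
    obtain ⟨z0, hz0⟩ := hne
    have hrep : ∃ w ∈ l ++ m, cnt w l ≠ cnt w m := by
      by_cases h0 : 0 < cnt z0 l
      · obtain ⟨w, hw, hzw⟩ := cnt_mem_of_pos h0
        refine ⟨w, List.mem_append.mpr (Or.inl hw), ?_⟩
        rw [← cnt_congr hzw l, ← cnt_congr hzw m]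
        exact hz0
      · have h1 : 0 < cnt z0 m := by omega
        obtain ⟨w, hw, hzw⟩ := cnt_mem_of_pos h1
        refine ⟨w, List.mem_append.mpr (Or.inr hw), ?_⟩
        rw [← cnt_congr hzw l, ← cnt_congr hzw m]
        exact hz0
    obtain ⟨w, hwmem, hwne, hwmax⟩ := exists_max_size hrep
    rcases Nat.lt_or_ge (cnt w m) (cnt w l) with hlt | hge
    · exact no_excess ih hl hm hb hsz hlt hwmax
    · have hlt : cnt w l < cnt w m := by omega
      refine no_excess ih hm hl (bisim_symm hb) (by rw [← bisim_size hb]; exact hsz) hlt ?_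
      intro w' hw' hne'
      refine hwmax w' ?_ (Ne.symm hne')
      rcases List.mem_append.mp hw' with h | h
      · exact List.mem_append.mpr (Or.inr h)
      · exact List.mem_append.mpr (Or.inl h)

/-- Weighted sum: total size of primes that can perform `η`. -/
noncomputable def gsum (η : Act) (l : List Proc) : ℕ :=
  (l.map (fun p => if CanStep p η then p.size else 0)).sum

theorem gsum_append (η : Act) (l m : List Proc) :
    gsum η (l ++ m) = gsum η l + gsum η m := by
  simp [gsum]

theorem gsum_cnt_eq (η : Act) : ∀ l m : List Proc,
    (∀ z, cnt z l = cnt z m) → gsum η l = gsum η m := by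
  intro l
  induction l with
  | nil =>
    intro m h
    cases m with
    | nil => rfl
    | cons b t =>
      exfalso
      have h2 := h b
      rw [show cnt b [] = 0 from rfl] at h2
      have hb : 0 < cnt b (b :: t) := cnt_self_mem (by simp)
      omega
  | cons a t ih =>
    intro m h
    have ha : 0 < cnt a m := by
      rw [← h a]; exact cnt_self_mem (by simp)
    obtain ⟨b, hb, hab⟩ := cnt_mem_of_pos ha
    obtain ⟨m₁, m₂, rfl⟩ := List.append_of_mem hb
    have hres : ∀ z, cnt z t = cnt z (m₁ ++ m₂) := by
      intro z
      have h1 := h z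
      rw [cnt_append] at h1
      rw [cnt_append]
      have : (if Bisim z a then 1 else 0) = (if Bisim z b then 1 else 0) := by
        by_cases hz : Bisim z a
        · rw [if_pos hz, if_pos (bisim_trans hz hab)]
        · rw [if_neg hz, if_neg (fun hc => hz (bisim_trans hc (bisim_symm hab)))]
      simp only [cnt] at h1
      omega
    have hw : (if CanStep a η then a.size else 0) = (if CanStep b η then b.size else 0) := by
      have hsz := bisim_size hab
      by_cases hc : CanStep a η
      · rw [if_pos hc, if_pos (canStep_congr hab hc), hsz]
      · rw [if_neg hc, if_neg (fun hc' => hc (canStep_congr (bisim_symm hab) hc'))]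
    calc gsum η (a :: t) = (if CanStep a η then a.size else 0) + gsum η t := by simp [gsum]
    _ = (if CanStep b η then b.size else 0) + gsum η (m₁ ++ m₂) := by rw [hw, ih _ hres]
    _ = gsum η (m₁ ++ b :: m₂) := by simp [gsum]; omega

theorem decomp_gsum (X : Proc) :
    ∃ l, (∀ p ∈ l, IsPrime p) ∧ Bisim X (Pl l) ∧ ∀ η, contrib η X = gsum η l := by
  induction X with
  | nil => exact ⟨[], by simp, bisim_refl _, fun η => rfl⟩
  | pre β R _ =>
    obtain ⟨l, hl, hb⟩ := decomp_exists (.pre β R)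
    refine ⟨l, hl, hb, ?_⟩
    intro η
    have hhead : ∀ p ∈ l, (hdbd p).1 = β := by
      intro p hp
      have h1 : CanStep (Pl l) (hdbd p).1 := canStep_Pl_iff.mpr ⟨p, hp, prime_canStep (hl p hp)⟩
      have h2 : CanStep (.pre β R) (hdbd p).1 := canStep_congr (bisim_symm hb) h1
      exact canStep_pre_iff.mp h2
    by_cases hβ : β = η
    · subst hβ
      have hmapeq : l.map (fun p => if CanStep p β then p.size else 0) = l.map Proc.size := by
        refine List.map_congr_left ?_
        intro p hp
        rw [if_pos ?_]
        rw [← hhead p hp]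
        exact prime_canStep (hl p hp)
      have : gsum β l = (Pl l).size := by
        rw [gsum, hmapeq, ← size_Pl]
      rw [this, ← bisim_size hb]
      simp [contrib]
    · have hmapeq : l.map (fun p => if CanStep p η then p.size else 0) = l.map (fun _ => 0) := by
        refine List.map_congr_left ?_
        intro p hp
        rw [if_neg ?_]
        intro hc
        obtain ⟨X', hs⟩ := hc
        obtain ⟨he, _⟩ := prime_step (hl p hp) hs
        have : η = (hdbd p).1 := by injection he
        rw [hhead p hp] at this
        exact hβ this.symm
      have : gsum η l = 0 := by
        rw [gsum, hmapeq]
        simp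
      rw [this]
      simp [contrib, hβ]
  | par A B ihA ihB =>
    obtain ⟨lA, hlA, hbA, hgA⟩ := ihA
    obtain ⟨lB, hlB, hbB, hgB⟩ := ihB
    refine ⟨lA ++ lB, ?_, ?_, ?_⟩
    · intro p hp
      rcases List.mem_append.mp hp with h | h
      · exact hlA p h
      · exact hlB p h
    · exact bisim_trans (bisim_par_congr hbA hbB) (bisim_symm (bisim_Pl_append lA lB))
    · intro η
      rw [gsum_append]
      simp only [contrib]
      rw [hgA η, hgB η]

end MicroCCS
/-- bisimilar processes have equal contribution at every prefix. -/
theorem bisim_contrib {P Q : Proc} (h : Bisim P Q) (η : Act) :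
    contrib η P = contrib η Q := by
  obtain ⟨lP, hlP, hbP, hgP⟩ := MicroCCS.decomp_gsum P
  obtain ⟨lQ, hlQ, hbQ, hgQ⟩ := MicroCCS.decomp_gsum Q
  have hbisim : Bisim (MicroCCS.Pl lP) (MicroCCS.Pl lQ) :=
    MicroCCS.bisim_trans (MicroCCS.bisim_symm hbP) (MicroCCS.bisim_trans h hbQ)
  have hcnt := MicroCCS.uh_all (MicroCCS.Pl lP).size lP lQ hlP hlQ hbisim le_rfl
  rw [hgP η, hgQ η]
  exact MicroCCS.gsum_cnt_eq η lP lQ hcnt
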